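/- Given an index set I and a family of pastures (P_i)_{i ∈ I}, the coproduct ⊗_{i∈I} P_i, whose nonzero elements are sign-equivalence classes of restricted tuples in ⊕_{i∈I} P_i^×, is a pasture: multiplication of classes is well-defined and makes the nonzero classes an abelian group, the involution (negating one coordinate) is well-defined, and the nullset satisfies the three axioms of a nullset; moreover, for each j ∈ I the map i_j : P_j → ⊗_{i∈I} P_i sending 0 to 0 and x ∈ P_j^× to the class of the tuple equal to x in coordinate j and 1 elsewhere is a morphism of pastures. -/

import Mathlib

universe u v w

/-- A pasture structure on a type `P`: a multiplication, a zero, a one,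
an involution `neg`, and a ternary nullset relation `null a b c`
(meaning "`a + b + c = 0`"). -/
structure PastureStr (P : Type u) where
  mul : P → P → P
  zero : P
  one : P
  neg : P → P
  null : P → P → P → Prop

/-- `P` together with a `PastureStr` is a pasture: `P` is a commutative
monoid with zero whose nonzero elements form an abelian group, `neg` is an
involution fixing `0`, and the nullset is invariant under permutations,
invariant under multiplication, and satisfies `a + b + 0 = 0 ↔ a = -b`. -/
structure PastureStr.IsPasture {P : Type u} (S : PastureStr P) : Prop where
  mul_comm : ∀ a b : P, S.mul a b = S.mul b a
  mul_assoc : ∀ a b c : P, S.mul (S.mul a b) c = S.mul a (S.mul b c)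
  one_mul : ∀ a : P, S.mul S.one a = a
  zero_mul : ∀ a : P, S.mul S.zero a = S.zero
  one_ne_zero : S.one ≠ S.zero
  mul_ne_zero : ∀ a b : P, a ≠ S.zero → b ≠ S.zero → S.mul a b ≠ S.zero
  exists_inv : ∀ a : P, a ≠ S.zero → ∃ b : P, S.mul a b = S.one
  neg_neg : ∀ a : P, S.neg (S.neg a) = a
  neg_zero : S.neg S.zero = S.zero
  null_swap_left : ∀ a b c : P, S.null a b c → S.null b a c
  null_swap_right : ∀ a b c : P, S.null a b c → S.null a c b
  null_mul : ∀ d a b c : P, S.null a b c → S.null (S.mul d a) (S.mul d b) (S.mul d c)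
  null_zero : ∀ a b : P, S.null a b S.zero ↔ a = S.neg b

/-- A morphism of pastures: a multiplicative map preserving `0`, `1`,
the involution and the nullset. -/
structure PastureStr.IsHom {P : Type u} {P' : Type v} (S : PastureStr P) (T : PastureStr P')
    (f : P → P') : Prop where
  map_mul : ∀ a b : P, f (S.mul a b) = T.mul (f a) (f b)
  map_zero : f S.zero = T.zero
  map_one : f S.one = T.one
  map_neg : ∀ a : P, f (S.neg a) = T.neg (f a)
  map_null : ∀ a b c : P, S.null a b c → T.null (f a) (f b) (f c)

/-- A restricted tuple in `⊕_{i ∈ I} (P i)^×`: a tuple of nonzero elements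
with all but finitely many coordinates equal to `1`. -/
def RTuple {I : Type v} (P : I → Type u) (S : ∀ i, PastureStr (P i)) :
    Type (max u v) :=
  {x : ∀ i, P i // (∀ i, x i ≠ (S i).zero) ∧ {i | x i ≠ (S i).one}.Finite}

/-- The sign equivalence on restricted tuples: `x ∼ y` iff there is an even
number of indices `i₁, …, i₂ₙ` at which `x` equals `-y`, while `x = y` at all
other indices. -/
def signRel {I : Type v} (P : I → Type u) (S : ∀ i, PastureStr (P i)) :
    RTuple P S → RTuple P S → Prop := fun x y =>
  ∃ E : Finset I, Even E.card ∧ (∀ i ∈ E, x.1 i = (S i).neg (y.1 i)) ∧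
    ∀ i ∉ E, x.1 i = y.1 i

/-- The underlying set of the coproduct `⊗_{i ∈ I} P i`:
`{0} ∪ (⊕_{i ∈ I} (P i)^× / ∼)`, with `none` playing the role of `0`. -/
def CoprodCarrier {I : Type v} (P : I → Type u) (S : ∀ i, PastureStr (P i)) :
    Type (max u v) :=
  Option (Quot (signRel P S))

/-- A pasture structure `SQ` on `{0} ∪ (⊕_{i ∈ I} (P i)^× / ∼)` realizes the
coproduct `⊗_{i ∈ I} P i` if: its zero is `0`, its one is the class of the
all-ones tuple, its multiplication is componentwise on classes with `0`
absorbing (in particular multiplication of classes is well-defined), its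
involution negates one coordinate (in particular this is well-defined), and
its nullset is: for nonzero classes, `[x] + [y] + [z] = 0` iff there are
representatives `x' ∼ x`, `y' ∼ y`, `z' ∼ z` and an index `j` with
`x'_j + y'_j + z'_j = 0` in `P j` and `x'_i = y'_i = z'_i` for all `i ≠ j`;
and `[x] + [y] + 0 = 0` iff `[x] = -[y]`. -/
def CoprodSpec {I : Type v} (P : I → Type u) (S : ∀ i, PastureStr (P i))
    (SQ : PastureStr (CoprodCarrier P S)) : Prop :=
  SQ.zero = none ∧
  (∀ t : RTuple P S, (∀ i, t.1 i = (S i).one) →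
      SQ.one = some (Quot.mk (signRel P S) t)) ∧
  (∀ x y t : RTuple P S, (∀ i, t.1 i = (S i).mul (x.1 i) (y.1 i)) →
      SQ.mul (some (Quot.mk (signRel P S) x)) (some (Quot.mk (signRel P S) y)) =
        some (Quot.mk (signRel P S) t)) ∧
  (∀ u, SQ.mul none u = none) ∧
  (∀ u, SQ.mul u none = none) ∧
  SQ.neg none = none ∧
  (∀ (x t : RTuple P S) (j : I), t.1 j = (S j).neg (x.1 j) →
      (∀ i, i ≠ j → t.1 i = x.1 i) →
      SQ.neg (some (Quot.mk (signRel P S) x)) = some (Quot.mk (signRel P S) t)) ∧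
  (∀ x y z : Quot (signRel P S),
      SQ.null (some x) (some y) (some z) ↔
        ∃ (x' y' z' : RTuple P S) (j : I),
          Quot.mk (signRel P S) x' = x ∧ Quot.mk (signRel P S) y' = y ∧
          Quot.mk (signRel P S) z' = z ∧
          (S j).null (x'.1 j) (y'.1 j) (z'.1 j) ∧
          ∀ i, i ≠ j → x'.1 i = y'.1 i ∧ y'.1 i = z'.1 i) ∧
  (∀ u v : CoprodCarrier P S, SQ.null u v none ↔ u = SQ.neg v)

/-- Maps `inc j : P j → ⊗_{i ∈ I} P i` realize the canonical inclusions if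
`inc j 0 = 0` and, for `x ∈ (P j)^×`, `inc j x` is the class of the tuple
equal to `x` in coordinate `j` and to `1` elsewhere. -/
def CoprodIncSpec {I : Type v} (P : I → Type u) (S : ∀ i, PastureStr (P i))
    (inc : ∀ j, P j → CoprodCarrier P S) : Prop :=
  (∀ j, inc j ((S j).zero) = none) ∧
  ∀ (j : I) (x : P j), x ≠ (S j).zero →
    ∀ t : RTuple P S, t.1 j = x → (∀ i, i ≠ j → t.1 i = (S i).one) →
      inc j x = some (Quot.mk (signRel P S) t)

/-! The nonzero classes form a commutative group: products and inverses are taken coordinatewise,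
and a sign change at an even number of coordinates commutes with them. Negating a tuple at any
single coordinate gives the same class, since negating at `j` and at `j'` differ by a sign change
at `{j, j'}`; this is the involution, and `d (-a) = -(d a)`. A pasture is determined by its unit
group, the involution and the nullset of triples of units, so it remains to see that the coproduct
nullset is invariant under permutations and multiplication, which holds in the distinguished
coordinate because it holds in each `P j`. As a null triple with a zero entry is a rotation of
`a + (-a) + 0 = 0`, the inclusions only have to be checked on null triples of nonzero elements. -/

namespace PastureStr

section Units

variable {P : Type u} {S : PastureStr P}

theorem IsPasture.mul_zero (hS : S.IsPasture) (a : P) : S.mul a S.zero = S.zero := by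
  rw [hS.mul_comm, hS.zero_mul]

theorem IsPasture.mul_one (hS : S.IsPasture) (a : P) : S.mul a S.one = a := by
  rw [hS.mul_comm, hS.one_mul]

theorem IsPasture.null_rotate (hS : S.IsPasture) {a b c : P} (h : S.null a b c) :
    S.null b c a :=
  hS.null_swap_right _ _ _ (hS.null_swap_left _ _ _ h)

/-- Multiply `-b + b + 0 = 0` by `d`. -/
theorem IsPasture.mul_neg (hS : S.IsPasture) (d b : P) :
    S.mul d (S.neg b) = S.neg (S.mul d b) := by
  have h := hS.null_mul d _ _ _ ((hS.null_zero (S.neg b) b).2 rfl)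
  rwa [hS.mul_zero, hS.null_zero] at h

theorem IsPasture.neg_mul (hS : S.IsPasture) (a b : P) :
    S.mul (S.neg a) b = S.neg (S.mul a b) := by
  rw [hS.mul_comm, hS.mul_neg, hS.mul_comm]

theorem IsPasture.neg_ne_zero (hS : S.IsPasture) {a : P} (ha : a ≠ S.zero) :
    S.neg a ≠ S.zero := fun h => ha (by rw [← hS.neg_neg a, h, hS.neg_zero])

end Units

section OfUnits

variable (G : Type u) [CommMonoid G]

def ofUnits (neg : G → G) (null : G → G → G → Prop) : PastureStr (Option G) where
  mul
    | some a, some b => some (a * b)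
    | _, _ => none
  zero := none
  one := some 1
  neg := Option.map neg
  null
    | some x, some y, some z => null x y z
    | some x, some y, none => x = neg y
    | some x, none, some z => x = neg z
    | none, some y, some z => y = neg z
    | none, none, none => True
    | _, _, _ => False

variable {G} {neg : G → G} {null : G → G → G → Prop}

theorem isPasture_ofUnits (exists_inv : ∀ a : G, ∃ b, a * b = 1)
    (neg_neg : ∀ a, neg (neg a) = a) (mul_neg : ∀ a b, a * neg b = neg (a * b))
    (null_swap_left : ∀ a b c, null a b c → null b a c)
    (null_swap_right : ∀ a b c, null a b c → null a c b)
    (null_mul : ∀ d a b c, null a b c → null (d * a) (d * b) (d * c)) :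
    (ofUnits G neg null).IsPasture where
  mul_comm := by rintro (_ | a) (_ | b) <;> simp [ofUnits, mul_comm]
  mul_assoc := by rintro (_ | a) (_ | b) (_ | c) <;> simp [ofUnits, mul_assoc]
  one_mul := by rintro (_ | a) <;> simp [ofUnits]
  zero_mul := by rintro (_ | a) <;> rfl
  one_ne_zero := by simp [ofUnits]
  mul_ne_zero := by rintro (_ | a) (_ | b) <;> simp [ofUnits]
  exists_inv := by
    rintro (_ | a) ha
    · exact absurd rfl ha
    · obtain ⟨b, hb⟩ := exists_inv a
      exact ⟨some b, by simp [ofUnits, hb]⟩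
  neg_neg := by rintro (_ | a) <;> simp [ofUnits, neg_neg]
  neg_zero := rfl
  null_swap_left := by
    rintro (_ | x) (_ | y) (_ | z) h <;> simp_all [ofUnits]
  null_swap_right := by
    rintro (_ | x) (_ | y) (_ | z) h <;> simp_all [ofUnits]
  null_mul := by
    rintro (_ | d) (_ | x) (_ | y) (_ | z) h <;> simp_all [ofUnits]
  null_zero := by rintro (_ | x) (_ | y) <;> simp [ofUnits]

end OfUnits

theorem IsHom.of_map_null_of_ne_zero {P : Type u} {P' : Type v} {S : PastureStr P}
    {T : PastureStr P'} (hS : S.IsPasture) (hT : T.IsPasture) {f : P → P'}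
    (map_mul : ∀ a b, f (S.mul a b) = T.mul (f a) (f b)) (map_zero : f S.zero = T.zero)
    (map_one : f S.one = T.one) (map_neg : ∀ a, f (S.neg a) = T.neg (f a))
    (map_null : ∀ a b c, a ≠ S.zero → b ≠ S.zero → c ≠ S.zero → S.null a b c →
      T.null (f a) (f b) (f c)) :
    IsHom S T f := by
  have map_null_zero : ∀ a b, S.null a b S.zero → T.null (f a) (f b) (f S.zero) := by
    intro a b h
    rw [map_zero, hT.null_zero, ← map_neg, ← (hS.null_zero a b).1 h]
  refine ⟨map_mul, map_zero, map_one, map_neg, fun a b c h => ?_⟩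
  by_cases hc : c = S.zero
  · subst hc; exact map_null_zero a b h
  by_cases ha : a = S.zero
  · subst ha; exact hT.null_rotate (hT.null_rotate (map_null_zero b c (hS.null_rotate h)))
  by_cases hb : b = S.zero
  · subst hb; exact hT.null_rotate (map_null_zero c a (hS.null_rotate (hS.null_rotate h)))
  exact map_null a b c ha hb hc h

end PastureStr

namespace RTuple

variable {I : Type v} {P : I → Type u} {S : ∀ i, PastureStr (P i)}

@[ext] theorem ext {x y : RTuple P S} (h : ∀ i, x.1 i = y.1 i) : x = y :=
  Subtype.ext (funext h)

def one (hP : ∀ i, (S i).IsPasture) : RTuple P S :=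
  ⟨fun i => (S i).one, fun i => (hP i).one_ne_zero, by simp⟩

@[simp] theorem one_apply (hP : ∀ i, (S i).IsPasture) (i : I) : (one hP).1 i = (S i).one :=
  rfl

def mul (hP : ∀ i, (S i).IsPasture) (x y : RTuple P S) : RTuple P S :=
  ⟨fun i => (S i).mul (x.1 i) (y.1 i), fun i => (hP i).mul_ne_zero _ _ (x.2.1 i) (y.2.1 i),
    (x.2.2.union y.2.2).subset fun i hi => by
      by_contra hxy
      simp only [Set.mem_union, Set.mem_ofPred_eq, not_or, not_not] at hxy
      exact hi (by simp only [hxy, (hP i).one_mul])⟩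

@[simp] theorem mul_apply (hP : ∀ i, (S i).IsPasture) (x y : RTuple P S) (i : I) :
    (mul hP x y).1 i = (S i).mul (x.1 i) (y.1 i) :=
  rfl

theorem mul_comm (hP : ∀ i, (S i).IsPasture) (x y : RTuple P S) : mul hP x y = mul hP y x :=
  ext fun i => (hP i).mul_comm _ _

theorem exists_mul_eq_one (hP : ∀ i, (S i).IsPasture) (x : RTuple P S) :
    ∃ y, mul hP x y = one hP := by
  choose inv hinv using fun i => (hP i).exists_inv (x.1 i) (x.2.1 i)
  have inv_ne_zero : ∀ i, inv i ≠ (S i).zero := fun i h0 =>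
    (hP i).one_ne_zero (by rw [← hinv i, h0, (hP i).mul_zero])
  have inv_one : ∀ i, x.1 i = (S i).one → inv i = (S i).one := fun i h1 => by
    rw [← hinv i, h1, (hP i).one_mul]
  exact ⟨⟨inv, inv_ne_zero, x.2.2.subset fun i hi h1 => hi (inv_one i h1)⟩, ext hinv⟩

variable [DecidableEq I]

def update (x : RTuple P S) (j : I) (a : P j) (ha : a ≠ (S j).zero) : RTuple P S :=
  ⟨Function.update x.1 j a, fun i => by
      rcases eq_or_ne i j with rfl | hij
      · simpa using ha
      · simpa [hij] using x.2.1 i,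
    (x.2.2.insert j).subset fun i hi => by
      rcases eq_or_ne i j with rfl | hij
      · exact Set.mem_insert _ _
      · exact Set.mem_insert_of_mem _ (by simpa [hij] using hi)⟩

@[simp] theorem update_apply_self (x : RTuple P S) (j : I) (a : P j) (ha : a ≠ (S j).zero) :
    (update x j a ha).1 j = a :=
  Function.update_self _ _ _

@[simp] theorem update_apply_of_ne (x : RTuple P S) {i j : I} (hij : i ≠ j) (a : P j)
    (ha : a ≠ (S j).zero) : (update x j a ha).1 i = x.1 i :=
  Function.update_of_ne hij _ _

theorem eq_update {x t : RTuple P S} {j : I} {a : P j} (ha : a ≠ (S j).zero) (htj : t.1 j = a)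
    (ht : ∀ i, i ≠ j → t.1 i = x.1 i) : t = update x j a ha := by
  ext i
  rcases eq_or_ne i j with rfl | hij
  · simpa using htj
  · simpa [hij] using ht i hij

def negAt (hP : ∀ i, (S i).IsPasture) (j : I) (x : RTuple P S) : RTuple P S :=
  update x j ((S j).neg (x.1 j)) ((hP j).neg_ne_zero (x.2.1 j))

def single (hP : ∀ i, (S i).IsPasture) (j : I) (a : P j) (ha : a ≠ (S j).zero) : RTuple P S :=
  update (one hP) j a ha

end RTuple

namespace signRel

variable {I : Type v} {P : I → Type u} {S : ∀ i, PastureStr (P i)}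
  (hP : ∀ i, (S i).IsPasture)

theorem mul_right {x x' : RTuple P S} (y : RTuple P S) (h : signRel P S x x') :
    signRel P S (RTuple.mul hP x y) (RTuple.mul hP x' y) := by
  obtain ⟨E, hE, hneg, heq⟩ := h
  refine ⟨E, hE, fun i hi => ?_, fun i hi => ?_⟩
  · simp only [RTuple.mul_apply, hneg i hi, (hP i).neg_mul]
  · simp only [RTuple.mul_apply, heq i hi]

theorem mul_left (x : RTuple P S) {y y' : RTuple P S} (h : signRel P S y y') :
    signRel P S (RTuple.mul hP x y) (RTuple.mul hP x y') := by
  simpa only [RTuple.mul_comm hP x] using mul_right hP x h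

variable [DecidableEq I]

theorem negAt (j : I) {x y : RTuple P S} (h : signRel P S x y) :
    signRel P S (RTuple.negAt hP j x) (RTuple.negAt hP j y) := by
  obtain ⟨E, hE, hneg, heq⟩ := h
  refine ⟨E, hE, fun i hi => ?_, fun i hi => ?_⟩ <;>
    rcases eq_or_ne i j with rfl | hij <;> simp_all [RTuple.negAt]

theorem negAt_negAt (j j' : I) (x : RTuple P S) :
    signRel P S (RTuple.negAt hP j x) (RTuple.negAt hP j' x) := by
  rcases eq_or_ne j j' with rfl | hjj'
  · exact ⟨∅, by simp, by simp, fun _ _ => rfl⟩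
  refine ⟨{j, j'}, by simp [Finset.card_pair hjj'], fun i hi => ?_, fun i hi => ?_⟩
  · rcases Finset.mem_insert.mp hi with rfl | hi
    · simp [RTuple.negAt, hjj']
    obtain rfl := Finset.mem_singleton.mp hi
    simp [RTuple.negAt, hjj'.symm, (hP i).neg_neg]
  · obtain ⟨hij, hij'⟩ : i ≠ j ∧ i ≠ j' := by simpa [not_or] using hi
    simp [RTuple.negAt, hij, hij']

end signRel

namespace Coprod

variable {I : Type v} {P : I → Type u} {S : ∀ i, PastureStr (P i)}

def null (x y z : Quot (signRel P S)) : Prop :=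
  ∃ (x' y' z' : RTuple P S) (j : I),
    Quot.mk (signRel P S) x' = x ∧ Quot.mk (signRel P S) y' = y ∧
    Quot.mk (signRel P S) z' = z ∧
    (S j).null (x'.1 j) (y'.1 j) (z'.1 j) ∧
    ∀ i, i ≠ j → x'.1 i = y'.1 i ∧ y'.1 i = z'.1 i

theorem null_swap_left (hP : ∀ i, (S i).IsPasture) (x y z : Quot (signRel P S))
    (h : null x y z) : null y x z := by
  obtain ⟨x', y', z', j, hx, hy, hz, hj, hrest⟩ := h
  exact ⟨y', x', z', j, hy, hx, hz, (hP j).null_swap_left _ _ _ hj,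
    fun i hi => ⟨(hrest i hi).1.symm, (hrest i hi).1.trans (hrest i hi).2⟩⟩

theorem null_swap_right (hP : ∀ i, (S i).IsPasture) (x y z : Quot (signRel P S))
    (h : null x y z) : null x z y := by
  obtain ⟨x', y', z', j, hx, hy, hz, hj, hrest⟩ := h
  exact ⟨x', z', y', j, hx, hz, hy, (hP j).null_swap_right _ _ _ hj,
    fun i hi => ⟨(hrest i hi).1.trans (hrest i hi).2, (hrest i hi).2.symm⟩⟩

variable (hP : ∀ i, (S i).IsPasture)

def mul : Quot (signRel P S) → Quot (signRel P S) → Quot (signRel P S) :=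
  Quot.map₂ (RTuple.mul hP) (fun x _ _ => signRel.mul_left hP x)
    (fun _ _ y => signRel.mul_right hP y)

abbrev commMonoid : CommMonoid (Quot (signRel P S)) where
  mul := mul hP
  one := Quot.mk _ (RTuple.one hP)
  mul_assoc := by
    rintro ⟨x⟩ ⟨y⟩ ⟨z⟩
    exact congrArg (Quot.mk _) (RTuple.ext fun i => (hP i).mul_assoc _ _ _)
  one_mul := by
    rintro ⟨x⟩
    exact congrArg (Quot.mk _) (RTuple.ext fun i => (hP i).one_mul _)
  mul_one := by
    rintro ⟨x⟩
    exact congrArg (Quot.mk _) (RTuple.ext fun i => (hP i).mul_one _)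
  mul_comm := by
    rintro ⟨x⟩ ⟨y⟩
    exact congrArg (Quot.mk _) (RTuple.mul_comm hP x y)

theorem exists_mul_eq_one (a : Quot (signRel P S)) :
    ∃ b, mul hP a b = Quot.mk _ (RTuple.one hP) := by
  induction a using Quot.ind with
  | mk x =>
    obtain ⟨y, hy⟩ := RTuple.exists_mul_eq_one hP x
    exact ⟨Quot.mk _ y, congrArg (Quot.mk _) hy⟩

theorem null_mul (d x y z : Quot (signRel P S)) (h : null x y z) :
    null (mul hP d x) (mul hP d y) (mul hP d z) := by
  obtain ⟨x', y', z', j, rfl, rfl, rfl, hj, hrest⟩ := h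
  induction d using Quot.ind with
  | mk d =>
    refine ⟨RTuple.mul hP d x', RTuple.mul hP d y', RTuple.mul hP d z', j, rfl, rfl, rfl,
      (hP j).null_mul _ _ _ _ hj, fun i hi => ?_⟩
    simp only [RTuple.mul_apply, (hrest i hi).1, (hrest i hi).2, and_self]

variable [DecidableEq I]

/-- By `neg_mk` the choice of coordinate is irrelevant; for `I = ∅` the quotient is a point. -/
noncomputable def neg : Quot (signRel P S) → Quot (signRel P S) :=
  open Classical in
  if h : Nonempty I then Quot.map (RTuple.negAt hP h.some) fun _ _ => signRel.negAt hP _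
  else id

theorem neg_mk (j : I) (x : RTuple P S) :
    neg hP (Quot.mk _ x) = Quot.mk _ (RTuple.negAt hP j x) := by
  rw [neg, dif_pos ⟨j⟩]
  exact Quot.sound (signRel.negAt_negAt hP _ j x)

theorem neg_neg (a : Quot (signRel P S)) : neg hP (neg hP a) = a := by
  by_cases hI : Nonempty I
  · obtain ⟨j⟩ := hI
    induction a using Quot.ind with
    | mk x =>
      rw [neg_mk hP j, neg_mk hP j]
      congr 1
      ext i
      rcases eq_or_ne i j with rfl | hij <;> simp_all [RTuple.negAt, (hP i).neg_neg]
  · simp [neg, hI]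

theorem mul_neg (a b : Quot (signRel P S)) : mul hP a (neg hP b) = neg hP (mul hP a b) := by
  by_cases hI : Nonempty I
  · obtain ⟨j⟩ := hI
    induction a using Quot.ind with
    | mk x =>
    induction b using Quot.ind with
    | mk y =>
      rw [neg_mk hP j, mul, Quot.map₂_mk, Quot.map₂_mk, neg_mk hP j]
      congr 1
      ext i
      rcases eq_or_ne i j with rfl | hij <;> simp_all [RTuple.negAt, (hP i).mul_neg]
  · simp [neg, hI]


noncomputable def pastureStr : PastureStr (CoprodCarrier P S) :=
  @PastureStr.ofUnits _ (commMonoid hP) (neg hP) null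

theorem isPasture : (pastureStr hP).IsPasture :=
  letI := commMonoid hP
  PastureStr.isPasture_ofUnits (exists_mul_eq_one hP) (neg_neg hP) (mul_neg hP)
    (null_swap_left hP) (null_swap_right hP) (null_mul hP)

theorem coprodSpec : CoprodSpec P S (pastureStr hP) := by
  refine ⟨rfl, fun t ht => ?_, fun x y t ht => ?_, by rintro (_ | _) <;> rfl,
    by rintro (_ | _) <;> rfl, rfl, fun x t j htj ht => ?_, fun _ _ _ => Iff.rfl,
    (isPasture hP).null_zero⟩
  · exact congrArg (some ∘ Quot.mk _) (RTuple.ext fun i => (ht i).symm)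
  · exact congrArg (some ∘ Quot.mk _) (RTuple.ext fun i => (ht i).symm)
  · rw [RTuple.eq_update ((hP j).neg_ne_zero (x.2.1 j)) htj ht]
    exact congrArg some (neg_mk hP j x)

open Classical in
noncomputable def inc (j : I) (a : P j) : CoprodCarrier P S :=
  if ha : a = (S j).zero then none else some (Quot.mk _ (RTuple.single hP j a ha))

theorem inc_zero (j : I) : inc hP j (S j).zero = none :=
  dif_pos rfl

theorem inc_of_ne_zero {j : I} {a : P j} (ha : a ≠ (S j).zero) :
    inc hP j a = some (Quot.mk _ (RTuple.single hP j a ha)) :=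
  dif_neg ha

theorem incSpec : CoprodIncSpec P S (inc hP) := by
  refine ⟨inc_zero hP, fun j a ha t htj ht => ?_⟩
  rw [inc_of_ne_zero hP ha, RTuple.eq_update (x := RTuple.one hP) ha htj ht]
  rfl

theorem inc_mul (j : I) (a b : P j) :
    inc hP j ((S j).mul a b) = (pastureStr hP).mul (inc hP j a) (inc hP j b) := by
  have hS := hP j
  by_cases ha : a = (S j).zero
  · subst ha; rw [hS.zero_mul, inc_zero]; rfl
  by_cases hb : b = (S j).zero
  · subst hb; rw [hS.mul_zero, inc_zero]; cases inc hP j a <;> rfl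
  rw [inc_of_ne_zero hP (hS.mul_ne_zero a b ha hb), inc_of_ne_zero hP ha, inc_of_ne_zero hP hb]
  refine congrArg (some ∘ Quot.mk _) (RTuple.ext fun i => ?_)
  rcases eq_or_ne i j with rfl | hij <;> simp_all [RTuple.single, (hP i).one_mul]

theorem inc_one (j : I) : inc hP j (S j).one = (pastureStr hP).one := by
  rw [inc_of_ne_zero hP (hP j).one_ne_zero]
  refine congrArg (some ∘ Quot.mk _) (RTuple.ext fun i => ?_)
  rcases eq_or_ne i j with rfl | hij <;> simp_all [RTuple.single]

theorem inc_neg (j : I) (a : P j) :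
    inc hP j ((S j).neg a) = (pastureStr hP).neg (inc hP j a) := by
  by_cases ha : a = (S j).zero
  · subst ha; rw [(hP j).neg_zero, inc_zero]; rfl
  rw [inc_of_ne_zero hP ((hP j).neg_ne_zero ha), inc_of_ne_zero hP ha]
  refine congrArg some (Eq.trans ?_ (neg_mk hP j _).symm)
  refine congrArg (Quot.mk _) (RTuple.ext fun i => ?_)
  rcases eq_or_ne i j with rfl | hij <;> simp_all [RTuple.single, RTuple.negAt]

theorem inc_null {j : I} {a b c : P j} (ha : a ≠ (S j).zero) (hb : b ≠ (S j).zero)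
    (hc : c ≠ (S j).zero) (h : (S j).null a b c) :
    (pastureStr hP).null (inc hP j a) (inc hP j b) (inc hP j c) := by
  rw [inc_of_ne_zero hP ha, inc_of_ne_zero hP hb, inc_of_ne_zero hP hc]
  exact ⟨_, _, _, j, rfl, rfl, rfl, by simpa [RTuple.single] using h,
    fun i hi => by simp [RTuple.single, hi]⟩

theorem isHom_inc (j : I) : (S j).IsHom (pastureStr hP) (inc hP j) :=
  .of_map_null_of_ne_zero (hP j) (isPasture hP) (inc_mul hP j) (inc_zero hP j) (inc_one hP j)
    (inc_neg hP j) fun _ _ _ => inc_null hP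

end Coprod

/-- **The coproduct of an arbitrary family of pastures is a pasture**: there
is a pasture structure on `{0} ∪ (⊕_{i ∈ I} (P i)^× / ∼)` with the prescribed
zero, one, (well-defined) multiplication and involution of sign-equivalence
classes, and nullset; moreover the canonical maps `inc j : P j → ⊗_{i ∈ I} P i`
are morphisms of pastures. -/
theorem coproduct_is_pasture {I : Type v} (P : I → Type u)
    (S : ∀ i, PastureStr (P i)) (h : ∀ i, (S i).IsPasture) :
    ∃ SQ : PastureStr (CoprodCarrier P S),
      CoprodSpec P S SQ ∧ SQ.IsPasture ∧
      ∃ inc : ∀ j, P j → CoprodCarrier P S,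
        CoprodIncSpec P S inc ∧ ∀ j, PastureStr.IsHom (S j) SQ (inc j) := by
  classical
  exact ⟨Coprod.pastureStr h, Coprod.coprodSpec h, Coprod.isPasture h, Coprod.inc h,
    Coprod.incSpec h, Coprod.isHom_inc h⟩
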